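/- Suppose each restriction p_e|_{K_{i(e)}} is Dini-continuous and bounded below by some δ > 0. Then for every x ∈ K and every m ≤ 0, the measure P^m_x is absolutely continuous with respect to P^m_{x_1...x_N}. -/

import Mathlib

open MeasureTheory ENNReal Filter

/-- A contractive Markov system on a metric space `K` with vertex type `V` and edge type `E`. -/
structure CMS (E V K : Type*) [Fintype E] [MetricSpace K] [MeasurableSpace K] where
  i : E → V
  t : E → V
  Ks : V → Set K
  w : E → K → K
  p : E → K → ℝ
  a : ℝ
  ha0 : 0 < a
  ha1 : a < 1
  Ks_nonempty : ∀ v, (Ks v).Nonempty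
  Ks_meas : ∀ v, MeasurableSet (Ks v)
  Ks_disj : ∀ v v', v ≠ v' → Disjoint (Ks v) (Ks v')
  Ks_cover : ∀ x : K, ∃ v, x ∈ Ks v
  w_meas : ∀ e, Measurable (w e)
  p_meas : ∀ e, Measurable (p e)
  p_nonneg : ∀ e x, 0 ≤ p e x
  p_sum : ∀ x : K, ∑ e, p e x = 1
  p_zero : ∀ e, ∀ x ∉ Ks (i e), p e x = 0
  w_maps : ∀ e, Set.MapsTo (w e) (Ks (i e)) (Ks (t e))
  contractive : ∀ v, ∀ x ∈ Ks v, ∀ y ∈ Ks v,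
      ∑ e, p e x * dist (w e x) (w e y) ≤ a * dist x y

variable {E V K : Type*} [Fintype E] [MetricSpace K] [MeasurableSpace K]

/-- `S.orbit e m x j = w_{e_{m+j}} ∘ ⋯ ∘ w_{e_m} (x)`. -/
def CMS.orbit (S : CMS E V K) (e : ℤ → E) (m : ℤ) (x : K) : ℕ → K
  | 0 => S.w (e m) x
  | j + 1 => S.w (e (m + j + 1)) (S.orbit e m x j)

/-- `S.pathProb e m x j = p_{e_m}(x) p_{e_{m+1}}(w_{e_m}x) ⋯ p_{e_{m+j}}(w_{e_{m+j-1}}∘⋯∘w_{e_m}x)`. -/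
def CMS.pathProb (S : CMS E V K) (e : ℤ → E) (m : ℤ) (x : K) : ℕ → ℝ
  | 0 => S.p (e m) x
  | j + 1 => S.pathProb e m x j * S.p (e (m + j + 1)) (S.orbit e m x j)

/-- The σ-algebra `𝒜_m` on `Σ = E^ℤ` generated by the coordinates with index `≥ m`. -/
def Am (E : Type*) (m : ℤ) : MeasurableSpace (ℤ → E) :=
  ⨆ (i : ℤ) (_ : m ≤ i), MeasurableSpace.comap (fun σ => σ i) ⊤

/-- The cylinder `_m[e_m, …, e_{m+j}]`. -/
def cyl (m : ℤ) (j : ℕ) (e : ℤ → E) : Set (ℤ → E) :=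
  {σ | ∀ k : ℤ, m ≤ k → k ≤ m + j → σ k = e k}

/-- `P` is the family of Markov measures `P^m_x` on `(Σ, 𝒜_m)` of the CMS `S`. -/
def IsKernel (S : CMS E V K) (P : ∀ m : ℤ, K → @Measure (ℤ → E) (Am E m)) : Prop :=
  (∀ (m : ℤ) (x : K), @IsProbabilityMeasure _ (Am E m) (P m x)) ∧
  ∀ (m : ℤ) (x : K) (e : ℤ → E) (j : ℕ),
    P m x (cyl m j e) = ENNReal.ofReal (S.pathProb e m x j)

/-- The `m`-th lift `Φ_m(ν)(A) = ∫ P^m_x(A) dν(x)`. -/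
noncomputable def liftMeas (P : ∀ m : ℤ, K → @Measure (ℤ → E) (Am E m))
    (m : ℤ) (ν : Measure K) (A : Set (ℤ → E)) : ℝ≥0∞ :=
  ∫⁻ x, P m x A ∂ν

/-- The lift outer measure `Φ(ν)`, via coverings `B ⊆ ⋃_{m ≤ 0} A_m`, `A_m ∈ 𝒜_m` (indexed by `m = -n`). -/
noncomputable def PhiM (P : ∀ m : ℤ, K → @Measure (ℤ → E) (Am E m))
    (ν : Measure K) (B : Set (ℤ → E)) : ℝ≥0∞ :=
  ⨅ (A : ℕ → Set (ℤ → E)) (_ : ∀ n : ℕ, MeasurableSet[Am E (-(n : ℤ))] (A n))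
    (_ : B ⊆ ⋃ n, A n), ∑' n : ℕ, liftMeas P (-(n : ℤ)) ν (A n)

/-- `Y^{x_1…x_N}_{m0}(σ) = w_{σ_0}∘⋯∘w_{σ_m}(x_{i(σ_m)})`. -/
noncomputable def CMS.Y (S : CMS E V K) (xs : V → K) (m : ℤ) (σ : ℤ → E) : K :=
  S.orbit σ m (xs (S.i (σ m))) (-m).toNat

/-- The uniform measure `(1/N) ∑_i δ_{x_i}`. -/
noncomputable def unif [Fintype V] (xs : V → K) : Measure K :=
  ((Fintype.card V : ℝ≥0∞))⁻¹ • ∑ v : V, Measure.dirac (xs v)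

/-- The measure `P^m_{x_1…x_N} = Φ_m((1/N)∑δ_{x_i}) = (1/N)∑_i P^m_{x_i}`. -/
noncomputable def PmMix [Fintype V] (P : ∀ m : ℤ, K → @Measure (ℤ → E) (Am E m))
    (xs : V → K) (m : ℤ) : @Measure (ℤ → E) (Am E m) :=
  ((Fintype.card V : ℝ≥0∞))⁻¹ • ∑ v : V, P m (xs v)


/-!
Fix `x ∈ K_v` and compare with `z = x_v`. Contractivity gives
`∑_{|w| = k+1} P_x[w] · d(w x, w z) ≤ a^{k+1} d(x, z)`, so for `a < b < 1` Markov's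
inequality and Borel–Cantelli show that `P^m_x`-almost every path eventually keeps the orbits
of `x` and `z` `b^k`-close. On the set `G_n` of paths that are close from step `n` on, each
step of the path probability from `x` exceeds the one from `z` by at most a factor `δ⁻¹`
(first `n` steps) or `exp (Φ(b^k)/δ)` with `Φ = ∑ₑ φₑ` (afterwards); Dini continuity makes
`∑ Φ(b^k)` finite, so `P^m_x(C ∩ G_n) ≤ C_n P^m_z(C)` uniformly on cylinders `C`, hence on
all of `𝒜_m`. A null set of `P^m_{x_1…x_N}` is `P^m_z`-null, so it meets every `G_n` in a
`P^m_x`-null set.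
-/

section Words

variable {E : Type*}

def word (m : ℤ) (j : ℕ) (σ : ℤ → E) : Fin (j + 1) → E := fun k => σ (m + k)

/-- Any sequence with `word m j (extendWord m j w) = w`; its values off `[m, m + j]` do not
matter. -/
def extendWord (m : ℤ) (j : ℕ) (w : Fin (j + 1) → E) : ℤ → E :=
  fun z => w (Fin.ofNat (j + 1) (z - m).toNat)

@[simp]
lemma word_extendWord (m : ℤ) (j : ℕ) (w : Fin (j + 1) → E) :
    word m j (extendWord m j w) = w := by
  funext k
  simp [word, extendWord]

lemma word_eq_init_word (m : ℤ) (j : ℕ) (σ : ℤ → E) :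
    word m j σ = Fin.init (word m (j + 1) σ) := rfl

lemma mem_cyl_iff_word_eq {m : ℤ} {j : ℕ} {e σ : ℤ → E} :
    σ ∈ cyl m j e ↔ word m j σ = word m j e := by
  refine ⟨fun h => funext fun k => h _ (by omega) (by omega), fun h k hmk hkj => ?_⟩
  have := congrFun h ⟨(k - m).toNat, by omega⟩
  simp only [word] at this
  rwa [show m + ((k - m).toNat : ℕ) = k by omega] at this

lemma preimage_word_singleton (m : ℤ) (j : ℕ) (w : Fin (j + 1) → E) :
    word m j ⁻¹' {w} = cyl m j (extendWord m j w) := by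
  ext σ
  simp [mem_cyl_iff_word_eq]

lemma mem_cyl_extendWord_word (m : ℤ) (j : ℕ) (σ : ℤ → E) :
    σ ∈ cyl m j (extendWord m j (word m j σ)) := by
  simp [mem_cyl_iff_word_eq]

lemma extendWord_snoc_mem_cyl (m : ℤ) (j : ℕ) (w : Fin (j + 1) → E) (e0 : E) :
    extendWord m (j + 1) (Fin.snoc w e0) ∈ cyl m j (extendWord m j w) := by
  rw [mem_cyl_iff_word_eq, word_eq_init_word, word_extendWord, word_extendWord, Fin.init_snoc]

lemma extendWord_snoc_last (m : ℤ) (j : ℕ) (w : Fin (j + 1) → E) (e0 : E) :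
    extendWord m (j + 1) (Fin.snoc w e0) (m + j + 1) = e0 := by
  have := congrFun (word_extendWord m (j + 1) (Fin.snoc w e0)) (Fin.last (j + 1))
  rwa [Fin.snoc_last, word, Fin.val_last, Nat.cast_succ, ← add_assoc] at this

lemma cyl_eq_of_mem {m : ℤ} {j : ℕ} {e σ : ℤ → E} (h : σ ∈ cyl m j e) :
    cyl m j σ = cyl m j e := by
  ext τ
  rw [mem_cyl_iff_word_eq, mem_cyl_iff_word_eq, mem_cyl_iff_word_eq.1 h]

lemma cyl_succ_subset (m : ℤ) (j : ℕ) (e : ℤ → E) : cyl m (j + 1) e ⊆ cyl m j e :=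
  fun _ h k hmk hkj => h k hmk (by omega)

lemma measurableSet_coord_preimage {m i : ℤ} (hi : m ≤ i) (s : Set E) :
    MeasurableSet[Am E m] ((fun σ : ℤ → E => σ i) ⁻¹' s) :=
  le_iSup₂ (f := fun i (_ : m ≤ i) => MeasurableSpace.comap (fun σ : ℤ → E => σ i) ⊤)
    i hi _ ⟨s, trivial, rfl⟩

lemma preimage_word_eq_of_le {m : ℤ} {j j' : ℕ} (h : j ≤ j') (F : Set (Fin (j + 1) → E)) :
    word m j ⁻¹' F = word m j' ⁻¹' ((· ∘ Fin.castLE (by omega)) ⁻¹' F) := rfl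

/-- Finite unions of cylinders `_m[e_m, …, e_{m+j}]`. -/
def cylinderUnions (E : Type*) (m : ℤ) : Set (Set (ℤ → E)) :=
  {s | ∃ (j : ℕ) (F : Set (Fin (j + 1) → E)), s = word m j ⁻¹' F}

lemma isSetRing_cylinderUnions (m : ℤ) : IsSetRing (cylinderUnions E m) := by
  have common : ∀ s ∈ cylinderUnions E m, ∀ t ∈ cylinderUnions E m, ∃ (j : ℕ)
      (F G : Set (Fin (j + 1) → E)), s = word m j ⁻¹' F ∧ t = word m j ⁻¹' G := by
    rintro _ ⟨j, F, rfl⟩ _ ⟨j', G, rfl⟩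
    exact ⟨max j j', _, _, preimage_word_eq_of_le (le_max_left j j') F,
      preimage_word_eq_of_le (le_max_right j j') G⟩
  refine ⟨⟨0, ∅, rfl⟩, fun s t hs ht => ?_, fun s t hs ht => ?_⟩
  · obtain ⟨j, F, G, rfl, rfl⟩ := common s hs t ht
    exact ⟨j, F ∪ G, rfl⟩
  · obtain ⟨j, F, G, rfl, rfl⟩ := common s hs t ht
    exact ⟨j, F \ G, rfl⟩

variable [Fintype E]

lemma measurableSet_preimage_word (m : ℤ) (j : ℕ) (F : Set (Fin (j + 1) → E)) :
    MeasurableSet[Am E m] (word m j ⁻¹' F) := by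
  rw [← Set.biUnion_preimage_singleton]
  refine MeasurableSet.biUnion F.to_countable fun w _ => ?_
  have : word m j ⁻¹' {w} =
      ⋂ k : Fin (j + 1), (fun σ : ℤ → E => σ (m + k)) ⁻¹' {w k} := by
    ext σ
    simp [word, funext_iff]
  rw [this]
  exact MeasurableSet.iInter fun k => measurableSet_coord_preimage (by omega) _

lemma measurableSet_cyl (m : ℤ) (j : ℕ) (e : ℤ → E) :
    MeasurableSet[Am E m] (cyl m j e) := by
  have : cyl m j e = word m j ⁻¹' {word m j e} := by
    ext σ
    simp [mem_cyl_iff_word_eq]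
  rw [this]
  exact measurableSet_preimage_word m j _

lemma Am_eq_generateFrom_cylinderUnions (m : ℤ) :
    Am E m = MeasurableSpace.generateFrom (cylinderUnions E m) := by
  refine le_antisymm (iSup₂_le fun i hi => ?_) (MeasurableSpace.generateFrom_le ?_)
  · rintro _ ⟨s, -, rfl⟩
    refine MeasurableSpace.measurableSet_generateFrom
      ⟨(i - m).toNat, (fun w => w (Fin.last _)) ⁻¹' s, ?_⟩
    have hi' : m + ((i - m).toNat : ℤ) = i := by omega
    ext σ
    simp only [Set.mem_preimage, word, Fin.val_last, hi']
  · rintro _ ⟨j, F, rfl⟩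
    exact measurableSet_preimage_word m j F

open scoped Classical in
lemma measure_preimage_word {m : ℤ} {j : ℕ} (ρ : @Measure (ℤ → E) (Am E m))
    (F : Set (Fin (j + 1) → E)) :
    ρ (word m j ⁻¹' F) = ∑ w ∈ F.toFinset, ρ (cyl m j (extendWord m j w)) := by
  let _ := Am E m
  conv_lhs => rw [← Set.coe_toFinset F]
  rw [← sum_measure_preimage_singleton _ fun w _ => measurableSet_preimage_word m j {w}]
  simp only [preimage_word_singleton]

end Words

lemma apply_eq_zero_of_PmMix_apply_eq_zero {E V K : Type*} [Fintype V]
    {P : ∀ m : ℤ, K → @Measure (ℤ → E) (Am E m)} {xs : V → K} {m : ℤ}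
    {A : Set (ℤ → E)} (h : PmMix P xs m A = 0) (v : V) : P m (xs v) A = 0 := by
  simp only [PmMix, Measure.smul_apply, smul_eq_mul, Measure.coe_finsetSum, Finset.sum_apply,
    mul_eq_zero, ENNReal.inv_eq_zero, ENNReal.natCast_ne_top, false_or,
    Finset.sum_eq_zero_iff] at h
  exact h v (Finset.mem_univ v)

namespace MeasureTheory.Measure

variable {α : Type*} [mα : MeasurableSpace α]

lemma le_of_forall_mem_isSetRing {μ ν : Measure α} [IsFiniteMeasure μ] [IsFiniteMeasure ν]
    {C : Set (Set α)} (hC : IsSetRing C) (huniv : Set.univ ∈ C)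
    (hgen : mα = MeasurableSpace.generateFrom C) (h : ∀ s ∈ C, μ s ≤ ν s) : μ ≤ ν := by
  refine (Measure.le_iff).2 fun s hs => ENNReal.le_of_forall_pos_le_add fun ε hε _ => ?_
  have hε2 : (0 : ℝ≥0∞) < (ε : ℝ≥0∞) / 2 :=
    ENNReal.half_pos (by exact_mod_cast hε.ne')
  obtain ⟨t, htC, hts⟩ :=
    exists_measure_symmDiff_lt_of_generateFrom_isSetRing (μ := μ + ν) hC
      ⟨{Set.univ}, by simp, by simpa using huniv, by simp⟩ hgen hs hε2
  have hμ : μ (symmDiff t s) ≤ ε / 2 := (le_add_right le_rfl).trans hts.le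
  have hν : ν (symmDiff t s) ≤ ε / 2 := (le_add_left le_rfl).trans hts.le
  calc μ s ≤ μ (symmDiff t s) + μ t :=
        (measure_mono (le_symmDiff_sup_left t s)).trans (measure_union_le _ _)
    _ ≤ ε / 2 + ν t := add_le_add hμ (h t htC)
    _ ≤ ε / 2 + (ν (symmDiff t s) + ν s) := by
        gcongr
        exact (measure_mono (le_symmDiff_sup_right t s)).trans (measure_union_le _ _)
    _ ≤ ε / 2 + (ε / 2 + ν s) := by gcongr
    _ = ν s + ε := by rw [← add_assoc, ENNReal.add_halves, add_comm]

end MeasureTheory.Measure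

open MeasureTheory in
lemma summable_comp_pow_of_integrableOn_div {g : ℝ → ℝ} (hg : Monotone g)
    (hg0 : ∀ t, 0 ≤ g t) {c : ℝ} (hc : 0 < c) (hint : IntegrableOn (fun t => g t / t) (Set.Ioc 0 c))
    {b : ℝ} (hb0 : 0 < b) (hb1 : b < 1) : Summable fun k : ℕ => g (b ^ k) := by
  obtain ⟨k0, hk0⟩ := exists_pow_lt_of_lt_one hc hb1
  set I : ℕ → Set ℝ := fun k => Set.Ioc (b ^ (k + k0 + 1)) (b ^ (k + k0))
  have hpow_anti : Antitone fun k : ℕ => b ^ k :=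
    fun _ _ h => pow_le_pow_of_le_one hb0.le hb1.le h
  have hI_sub : ⋃ k, I k ⊆ Set.Ioc 0 c := Set.iUnion_subset fun k t ht =>
    ⟨(pow_pos hb0 _).trans ht.1, ht.2.trans ((hpow_anti (by omega)).trans hk0.le)⟩
  have hI_disj : Pairwise (Function.onFun Disjoint I) := by
    refine pairwise_disjoint_on I |>.2 fun k l hkl => Set.disjoint_left.2 fun t htk htl => ?_
    exact (htk.1.trans_le (htl.2.trans (hpow_anti (by omega : k + k0 + 1 ≤ l + k0)))).false
  -- on `I k` the integrand is at least `g (b ^ (k + k0 + 1)) / b ^ (k + k0)`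
  have hlow : ∀ k, ENNReal.ofReal ((1 - b) * g (b ^ (k + k0 + 1)))
      ≤ ∫⁻ t in I k, ENNReal.ofReal (g t / t) := fun k => by
    have hbk : 0 < b ^ (k + k0) := pow_pos hb0 _
    calc ENNReal.ofReal ((1 - b) * g (b ^ (k + k0 + 1)))
        = ENNReal.ofReal (g (b ^ (k + k0 + 1)) / b ^ (k + k0)) * volume (I k) := by
          rw [Real.volume_Ioc, ← ENNReal.ofReal_mul (div_nonneg (hg0 _) hbk.le), pow_succ]
          congr 1
          field_simp
      _ = ∫⁻ _ in I k, ENNReal.ofReal (g (b ^ (k + k0 + 1)) / b ^ (k + k0)) :=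
          (setLIntegral_const _ _).symm
      _ ≤ ∫⁻ t in I k, ENNReal.ofReal (g t / t) :=
          setLIntegral_mono' measurableSet_Ioc fun t ht => ENNReal.ofReal_le_ofReal <|
            div_le_div₀ (hg0 t) (hg ht.1.le) ((pow_pos hb0 _).trans ht.1) ht.2
  have hfin : ∑' k, ∫⁻ t in I k, ENNReal.ofReal (g t / t) ≠ ⊤ := by
    rw [← lintegral_iUnion (fun _ => measurableSet_Ioc) hI_disj]
    refine ne_top_of_le_ne_top ?_ (lintegral_mono_set hI_sub)
    rw [← ofReal_integral_eq_lintegral_ofReal hint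
      (ae_restrict_of_forall_mem measurableSet_Ioc fun t ht => div_nonneg (hg0 t) ht.1.le)]
    exact ENNReal.ofReal_ne_top
  have hsum : Summable fun k => (1 - b) * g (b ^ (k + k0 + 1)) :=
    (ENNReal.summable_toReal hfin).of_nonneg_of_le
      (fun k => mul_nonneg (by linarith) (hg0 _))
      (fun k => (ENNReal.ofReal_le_iff_le_toReal (ENNReal.ne_top_of_tsum_ne_top hfin k)).1 (hlow k))
  exact (summable_nat_add_iff (k0 + 1)).1 ((summable_mul_left_iff (by linarith)).1 hsum)

namespace CMS

variable {E V K : Type*} [Fintype E] [MetricSpace K] [MeasurableSpace K]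

lemma p_le_one (S : CMS E V K) (e : E) (x : K) : S.p e x ≤ 1 :=
  S.p_sum x ▸ Finset.single_le_sum (fun e' _ => S.p_nonneg e' x) (Finset.mem_univ e)

lemma pathProb_nonneg (S : CMS E V K) (e : ℤ → E) (m : ℤ) (x : K) :
    ∀ j, 0 ≤ S.pathProb e m x j
  | 0 => S.p_nonneg _ _
  | j + 1 => mul_nonneg (pathProb_nonneg S e m x j) (S.p_nonneg _ _)

variable {S : CMS E V K}

lemma mem_Ks_i_of_p_ne_zero {e : E} {y : K} (h : S.p e y ≠ 0) : y ∈ S.Ks (S.i e) := by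
  by_contra hy
  exact h (S.p_zero e y hy)

lemma eq_of_mem_Ks {v v' : V} {y : K} (hv : y ∈ S.Ks v) (hv' : y ∈ S.Ks v') : v = v' := by
  by_contra hne
  exact Set.disjoint_left.1 (S.Ks_disj v v' hne) hv hv'

lemma mem_Ks_i_of_p_ne_zero_of_mem {e : E} {v : V} {y y' : K} (hy : y ∈ S.Ks v)
    (hy' : y' ∈ S.Ks v) (h : S.p e y ≠ 0) : y' ∈ S.Ks (S.i e) :=
  eq_of_mem_Ks hy (mem_Ks_i_of_p_ne_zero h) ▸ hy'

lemma orbit_mem_Ks_of_pathProb_ne_zero {e : ℤ → E} {m : ℤ} {v : V} {x z : K}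
    (hx : x ∈ S.Ks v) (hz : z ∈ S.Ks v) :
    ∀ {j : ℕ}, S.pathProb e m x j ≠ 0 →
      S.orbit e m x j ∈ S.Ks (S.t (e (m + j))) ∧ S.orbit e m z j ∈ S.Ks (S.t (e (m + j)))
  | 0, h => by
    simpa [CMS.orbit] using ⟨S.w_maps _ (mem_Ks_i_of_p_ne_zero h),
      S.w_maps _ (mem_Ks_i_of_p_ne_zero_of_mem hx hz h)⟩
  | j + 1, h => by
    have hj : S.pathProb e m x j ≠ 0 := fun h0 => h (by simp [CMS.pathProb, h0])
    have hp : S.p (e (m + j + 1)) (S.orbit e m x j) ≠ 0 :=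
      fun h0 => h (by simp [CMS.pathProb, h0])
    obtain ⟨hxj, hzj⟩ := orbit_mem_Ks_of_pathProb_ne_zero hx hz hj
    rw [Nat.cast_succ, ← add_assoc]
    exact ⟨S.w_maps _ (mem_Ks_i_of_p_ne_zero hp),
      S.w_maps _ (mem_Ks_i_of_p_ne_zero_of_mem hxj hzj hp)⟩

lemma orbit_eq_of_mem_cyl {m : ℤ} {e σ : ℤ → E} (x : K) :
    ∀ {j : ℕ}, σ ∈ cyl m j e → S.orbit σ m x j = S.orbit e m x j
  | 0, h => by simp [CMS.orbit, h m le_rfl (by simp)]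
  | j + 1, h => by
    simp only [CMS.orbit]
    rw [orbit_eq_of_mem_cyl x (cyl_succ_subset m j e h), h _ (by omega) (by omega)]

lemma pathProb_eq_of_mem_cyl {m : ℤ} {e σ : ℤ → E} (x : K) :
    ∀ {j : ℕ}, σ ∈ cyl m j e → S.pathProb σ m x j = S.pathProb e m x j
  | 0, h => by simp [CMS.pathProb, h m le_rfl (by simp)]
  | j + 1, h => by
    have hj := cyl_succ_subset m j e h
    simp only [CMS.pathProb]
    rw [pathProb_eq_of_mem_cyl x hj, orbit_eq_of_mem_cyl x hj, h _ (by omega) (by omega)]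

lemma le_one_of_forall_le_p {δ : ℝ} (hlow : ∀ e, ∀ u ∈ S.Ks (S.i e), δ ≤ S.p e u)
    (x : K) : δ ≤ 1 := by
  obtain ⟨e, -, he⟩ : ∃ e ∈ Finset.univ, S.p e x ≠ 0 :=
    Finset.exists_ne_zero_of_sum_ne_zero (by rw [S.p_sum x]; exact one_ne_zero)
  exact (hlow e x (mem_Ks_i_of_p_ne_zero he)).trans (S.p_le_one e x)

lemma sum_pathProb_mul_dist_orbit_le {v : V} {x z : K} (hx : x ∈ S.Ks v) (hz : z ∈ S.Ks v)
    (m : ℤ) : ∀ j : ℕ, ∑ w : Fin (j + 1) → E, S.pathProb (extendWord m j w) m x j *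
        dist (S.orbit (extendWord m j w) m x j) (S.orbit (extendWord m j w) m z j)
      ≤ S.a ^ (j + 1) * dist x z
  | 0 => by
    have hm : ∀ w : Fin 1 → E, extendWord m 0 w m = w 0 := fun w => by
      simpa [word] using congrFun (word_extendWord m 0 w) 0
    simp only [CMS.pathProb, CMS.orbit, hm, zero_add, pow_one]
    rw [Fintype.sum_equiv (Equiv.funUnique (Fin 1) E)
      (fun w => S.p (w 0) x * dist (S.w (w 0) x) (S.w (w 0) z))
      (fun e => S.p e x * dist (S.w e x) (S.w e z)) fun _ => rfl]
    exact S.contractive v x hx z hz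
  | j + 1 => by
    set y : (Fin (j + 1) → E) → K → K := fun w u => S.orbit (extendWord m j w) m u j
    have hsnoc : ∀ (e0 : E) (w : Fin (j + 1) → E),
        S.pathProb (extendWord m (j + 1) (Fin.snoc w e0)) m x (j + 1) *
          dist (S.orbit (extendWord m (j + 1) (Fin.snoc w e0)) m x (j + 1))
            (S.orbit (extendWord m (j + 1) (Fin.snoc w e0)) m z (j + 1))
        = S.pathProb (extendWord m j w) m x j *
            (S.p e0 (y w x) * dist (S.w e0 (y w x)) (S.w e0 (y w z))) := fun e0 w => by
      have hcyl := extendWord_snoc_mem_cyl m j w e0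
      simp only [CMS.pathProb, CMS.orbit, extendWord_snoc_last, pathProb_eq_of_mem_cyl x hcyl,
        orbit_eq_of_mem_cyl x hcyl, orbit_eq_of_mem_cyl z hcyl, y, mul_assoc]
    have hstep : ∀ w : Fin (j + 1) → E,
        ∑ e0, S.pathProb (extendWord m j w) m x j *
            (S.p e0 (y w x) * dist (S.w e0 (y w x)) (S.w e0 (y w z)))
        ≤ S.a * (S.pathProb (extendWord m j w) m x j * dist (y w x) (y w z)) := fun w => by
      rw [← Finset.mul_sum, mul_left_comm]
      by_cases hw : S.pathProb (extendWord m j w) m x j = 0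
      · simp [hw]
      obtain ⟨hxw, hzw⟩ := orbit_mem_Ks_of_pathProb_ne_zero hx hz hw
      exact mul_le_mul_of_nonneg_left (S.contractive _ _ hxw _ hzw) (S.pathProb_nonneg _ _ _ _)
    calc _ = ∑ w : Fin (j + 1) → E, ∑ e0, S.pathProb (extendWord m j w) m x j *
            (S.p e0 (y w x) * dist (S.w e0 (y w x)) (S.w e0 (y w z))) := by
          rw [← (Fin.snocEquiv fun _ => E).sum_comp, Fintype.sum_prod_type, Finset.sum_comm]
          exact Finset.sum_congr rfl fun w _ => Finset.sum_congr rfl fun e0 _ => hsnoc e0 w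
      _ ≤ S.a * ∑ w : Fin (j + 1) → E,
            S.pathProb (extendWord m j w) m x j * dist (y w x) (y w z) := by
          rw [Finset.mul_sum]
          exact Finset.sum_le_sum fun w _ => hstep w
      _ ≤ S.a * (S.a ^ (j + 1) * dist x z) :=
          mul_le_mul_of_nonneg_left (sum_pathProb_mul_dist_orbit_le hx hz m j) S.ha0.le
      _ = S.a ^ (j + 1 + 1) * dist x z := by ring

def orbitsClose (S : CMS E V K) (m : ℤ) (x z : K) (b : ℝ) (n : ℕ) : Set (ℤ → E) :=
  {σ | ∀ k, n ≤ k → dist (S.orbit σ m x k) (S.orbit σ m z k) ≤ b ^ k}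

section Kernel

variable {P : ∀ m : ℤ, K → @Measure (ℤ → E) (Am E m)} (hP : IsKernel S P)
include hP

open scoped Classical in
lemma measure_orbits_far_le {v : V} {x z : K} (hx : x ∈ S.Ks v) (hz : z ∈ S.Ks v) (m : ℤ)
    {b : ℝ} (hb : 0 < b) (k : ℕ) :
    P m x {σ | b ^ k < dist (S.orbit σ m x k) (S.orbit σ m z k)}
      ≤ ENNReal.ofReal (S.a * dist x z * (S.a / b) ^ k) := by
  set d : (Fin (k + 1) → E) → ℝ := fun w =>
    dist (S.orbit (extendWord m k w) m x k) (S.orbit (extendWord m k w) m z k)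
  set F : Set (Fin (k + 1) → E) := {w | b ^ k < d w}
  have hfar : {σ | b ^ k < dist (S.orbit σ m x k) (S.orbit σ m z k)} = word m k ⁻¹' F := by
    ext σ
    have hσ := mem_cyl_extendWord_word m k σ
    simp [F, d, orbit_eq_of_mem_cyl x hσ, orbit_eq_of_mem_cyl z hσ]
  have hbk : 0 < b ^ k := pow_pos hb k
  have hsum : ∑ w ∈ F.toFinset, S.pathProb (extendWord m k w) m x k
      ≤ S.a * dist x z * (S.a / b) ^ k :=
    calc ∑ w ∈ F.toFinset, S.pathProb (extendWord m k w) m x k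
        ≤ ∑ w ∈ F.toFinset, S.pathProb (extendWord m k w) m x k * d w / b ^ k :=
          Finset.sum_le_sum fun w hw => by
            rw [le_div_iff₀ hbk]
            exact mul_le_mul_of_nonneg_left (Set.mem_toFinset.1 hw).le (S.pathProb_nonneg _ _ _ _)
      _ ≤ (∑ w, S.pathProb (extendWord m k w) m x k * d w) / b ^ k := by
          rw [← Finset.sum_div]
          gcongr
          · exact fun w _ _ => mul_nonneg (S.pathProb_nonneg _ _ _ _) dist_nonneg
          · exact Finset.subset_univ _
      _ ≤ S.a ^ (k + 1) * dist x z / b ^ k := by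
          gcongr
          exact sum_pathProb_mul_dist_orbit_le hx hz m k
      _ = S.a * dist x z * (S.a / b) ^ k := by
          rw [div_pow]
          ring
  rw [hfar, measure_preimage_word, Finset.sum_congr rfl fun w _ => hP.2 m x _ k,
    ← ENNReal.ofReal_sum_of_nonneg fun w _ => S.pathProb_nonneg _ _ _ _]
  exact ENNReal.ofReal_le_ofReal hsum

/-- Borel–Cantelli: the bounds of `measure_orbits_far_le` are geometric since `a < b`. -/
lemma ae_exists_mem_orbitsClose {v : V} {x z : K} (hx : x ∈ S.Ks v) (hz : z ∈ S.Ks v) (m : ℤ)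
    {b : ℝ} (hab : S.a < b) : ∀ᵐ σ ∂(P m x), ∃ n, σ ∈ S.orbitsClose m x z b n := by
  have hb : 0 < b := S.ha0.trans hab
  have hgeom : Summable fun k : ℕ => S.a * dist x z * (S.a / b) ^ k :=
    (summable_geometric_of_lt_one (div_nonneg S.ha0.le hb.le) ((div_lt_one hb).2 hab)).mul_left _
  have hfin : ∑' k, P m x {σ | b ^ k < dist (S.orbit σ m x k) (S.orbit σ m z k)} ≠ ⊤ := by
    refine ne_top_of_le_ne_top ?_ (ENNReal.tsum_le_tsum (measure_orbits_far_le hP hx hz m hb))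
    rw [← ENNReal.ofReal_tsum_of_nonneg (fun k => mul_nonneg (mul_nonneg S.ha0.le dist_nonneg)
      (pow_nonneg (div_nonneg S.ha0.le hb.le) k)) hgeom]
    exact ENNReal.ofReal_ne_top
  filter_upwards [ae_eventually_notMem hfin] with σ hσ
  obtain ⟨n, hn⟩ := Filter.eventually_atTop.1 hσ
  exact ⟨n, fun k hk => not_lt.1 (hn k hk)⟩

end Kernel

section Distortion

variable {δ : ℝ} (hδ : 0 < δ) (hlow : ∀ e, ∀ u ∈ S.Ks (S.i e), δ ≤ S.p e u)
include hδ hlow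

lemma p_le_inv_mul_p {e : E} {v : V} {y y' : K} (hy : y ∈ S.Ks v) (hy' : y' ∈ S.Ks v) :
    S.p e y ≤ δ⁻¹ * S.p e y' := by
  by_cases h : S.p e y = 0
  · exact h ▸ mul_nonneg (inv_nonneg.2 hδ.le) (S.p_nonneg e y')
  calc S.p e y ≤ δ⁻¹ * δ := by rw [inv_mul_cancel₀ hδ.ne']; exact S.p_le_one e y
    _ ≤ δ⁻¹ * S.p e y' := by
        gcongr
        exact hlow e y' (mem_Ks_i_of_p_ne_zero_of_mem hy hy' h)

variable {φ : E → ℝ → ℝ} (hφ0 : ∀ e t, 0 ≤ φ e t)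
  (hmod : ∀ e, ∀ u ∈ S.Ks (S.i e), ∀ v ∈ S.Ks (S.i e), ∀ t : ℝ,
    dist u v ≤ t → |S.p e u - S.p e v| ≤ φ e t)
include hφ0 hmod

lemma p_le_exp_mul_p {e : E} {v : V} {y y' : K} (hy : y ∈ S.Ks v) (hy' : y' ∈ S.Ks v) {t : ℝ}
    (hd : dist y y' ≤ t) : S.p e y ≤ Real.exp (φ e t / δ) * S.p e y' := by
  by_cases h : S.p e y = 0
  · exact h ▸ mul_nonneg (Real.exp_nonneg _) (S.p_nonneg e y')
  have hyi := mem_Ks_i_of_p_ne_zero h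
  have hy'i := mem_Ks_i_of_p_ne_zero_of_mem hy hy' h
  have hφ : φ e t ≤ φ e t / δ * S.p e y' := by
    rw [div_mul_eq_mul_div, le_div_iff₀ hδ]
    exact mul_le_mul_of_nonneg_left (hlow e y' hy'i) (hφ0 e t)
  calc S.p e y ≤ S.p e y' + φ e t := by
        linarith [(abs_le.1 (hmod e y hyi y' hy'i t hd)).2]
    _ ≤ (φ e t / δ + 1) * S.p e y' := by linarith
    _ ≤ Real.exp (φ e t / δ) * S.p e y' := by
        gcongr
        · exact S.p_nonneg e y'
        · exact Real.add_one_le_exp _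

lemma pathProb_le_of_orbits_close {e : ℤ → E} {m : ℤ} {v : V} {x z : K} (hx : x ∈ S.Ks v)
    (hz : z ∈ S.Ks v) {b : ℝ} {n : ℕ} :
    ∀ {j : ℕ}, (∀ k, n ≤ k → k < j →
        dist (S.orbit e m x k) (S.orbit e m z k) ≤ b ^ k) →
      S.pathProb e m x j ≤ δ⁻¹ ^ (min j n + 1) *
        Real.exp ((∑ k ∈ Finset.range j, ∑ e', φ e' (b ^ k)) / δ) * S.pathProb e m z j
  | 0, _ => by simpa [CMS.pathProb] using p_le_inv_mul_p hδ hlow hx hz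
  | j + 1, hclose => by
    have ih := pathProb_le_of_orbits_close hx hz (j := j)
      fun k hnk hkj => hclose k hnk (by omega)
    by_cases hj : S.pathProb e m x j = 0
    · simp only [CMS.pathProb, hj, zero_mul]
      exact mul_nonneg (by positivity) (S.pathProb_nonneg e m z (j + 1))
    obtain ⟨hxj, hzj⟩ := orbit_mem_Ks_of_pathProb_ne_zero hx hz hj
    set e' := e (m + j + 1)
    set Φj := ∑ e'', φ e'' (b ^ j)
    have hstep : S.p e' (S.orbit e m x j) ≤
        δ⁻¹ ^ (min (j + 1) n - min j n) * Real.exp (Φj / δ) * S.p e' (S.orbit e m z j) := by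
      have hφΦ : φ e' (b ^ j) ≤ Φj :=
        Finset.single_le_sum (fun e'' _ => hφ0 e'' (b ^ j)) (Finset.mem_univ e')
      rcases lt_or_ge j n with hjn | hnj
      · rw [show min (j + 1) n - min j n = 1 by omega, pow_one]
        calc S.p e' (S.orbit e m x j) ≤ δ⁻¹ * 1 * S.p e' (S.orbit e m z j) := by
              simpa using p_le_inv_mul_p hδ hlow hxj hzj
          _ ≤ _ := by
              gcongr
              · exact S.p_nonneg _ _
              · exact Real.one_le_exp (div_nonneg (Finset.sum_nonneg fun _ _ => hφ0 _ _) hδ.le)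
      · rw [show min (j + 1) n - min j n = 0 by omega, pow_zero, one_mul]
        calc S.p e' (S.orbit e m x j)
            ≤ Real.exp (φ e' (b ^ j) / δ) * S.p e' (S.orbit e m z j) :=
              p_le_exp_mul_p hδ hlow hφ0 hmod hxj hzj (hclose j hnj (by omega))
          _ ≤ _ := by gcongr; exact S.p_nonneg _ _
    calc S.pathProb e m x (j + 1)
        = S.pathProb e m x j * S.p e' (S.orbit e m x j) := rfl
      _ ≤ (δ⁻¹ ^ (min j n + 1) *
            Real.exp ((∑ k ∈ Finset.range j, ∑ e', φ e' (b ^ k)) / δ) *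
            S.pathProb e m z j) *
          (δ⁻¹ ^ (min (j + 1) n - min j n) * Real.exp (Φj / δ) * S.p e' (S.orbit e m z j)) :=
          mul_le_mul ih hstep (S.p_nonneg _ _)
            (mul_nonneg (by positivity) (S.pathProb_nonneg e m z j))
      _ = _ := by
          rw [CMS.pathProb, Finset.sum_range_succ, add_div, Real.exp_add,
            show min (j + 1) n + 1 = (min j n + 1) + (min (j + 1) n - min j n) by omega, pow_add]
          ring

variable {P : ∀ m : ℤ, K → @Measure (ℤ → E) (Am E m)} (hP : IsKernel S P)
  {v : V} {x z : K} (hx : x ∈ S.Ks v) (hz : z ∈ S.Ks v)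
  {b : ℝ} (hΦ : Summable fun k : ℕ => ∑ e, φ e (b ^ k))
include hP hx hz hΦ

lemma measure_cyl_inter_orbitsClose_le {m : ℤ} (n j : ℕ) (e : ℤ → E) :
    P m x (cyl m j e ∩ S.orbitsClose m x z b n)
      ≤ ENNReal.ofReal (δ⁻¹ ^ (n + 1) * Real.exp ((∑' k, ∑ e, φ e (b ^ k)) / δ)) *
        P m z (cyl m j e) := by
  rcases (cyl m j e ∩ S.orbitsClose m x z b n).eq_empty_or_nonempty with h | ⟨σ, hσe, hσ⟩
  · simp [h]
  rw [← cyl_eq_of_mem hσe]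
  have hcoef :
      δ⁻¹ ^ (min j n + 1) * Real.exp ((∑ k ∈ Finset.range j, ∑ e, φ e (b ^ k)) / δ)
      ≤ δ⁻¹ ^ (n + 1) * Real.exp ((∑' k, ∑ e, φ e (b ^ k)) / δ) := by
    gcongr
    · exact (one_le_inv₀ hδ).2 (le_one_of_forall_le_p hlow x)
    · omega
    · exact hΦ.sum_le_tsum _ fun k _ => Finset.sum_nonneg fun e _ => hφ0 e _
  calc P m x (cyl m j σ ∩ S.orbitsClose m x z b n)
      ≤ P m x (cyl m j σ) := measure_mono Set.inter_subset_left
    _ = ENNReal.ofReal (S.pathProb σ m x j) := hP.2 m x σ j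
    _ ≤ ENNReal.ofReal (δ⁻¹ ^ (n + 1) * Real.exp ((∑' k, ∑ e, φ e (b ^ k)) / δ) *
          S.pathProb σ m z j) :=
        ENNReal.ofReal_le_ofReal <| (pathProb_le_of_orbits_close hδ hlow hφ0 hmod hx hz
          fun k hnk _ => hσ k hnk).trans
          (mul_le_mul_of_nonneg_right hcoef (S.pathProb_nonneg σ m z j))
    _ = _ := by rw [ENNReal.ofReal_mul (by positivity), hP.2 m z σ j]

/-- Bounded distortion on cylinders passes to all of `𝒜_m`, because finite unions of cylinders
form a ring generating `𝒜_m`. -/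
lemma measure_inter_orbitsClose_le {m : ℤ} {A : Set (ℤ → E)} (hA : MeasurableSet[Am E m] A)
    (n : ℕ) : P m x (A ∩ S.orbitsClose m x z b n)
      ≤ ENNReal.ofReal (δ⁻¹ ^ (n + 1) * Real.exp ((∑' k, ∑ e, φ e (b ^ k)) / δ)) *
        P m z A := by
  let _ := Am E m
  have := hP.1 m x
  have := hP.1 m z
  set C := δ⁻¹ ^ (n + 1) * Real.exp ((∑' k, ∑ e, φ e (b ^ k)) / δ)
  have hle : (P m x).restrict (S.orbitsClose m x z b n) ≤ C.toNNReal • P m z := by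
    refine Measure.le_of_forall_mem_isSetRing (isSetRing_cylinderUnions m) ⟨0, Set.univ, rfl⟩
      (Am_eq_generateFrom_cylinderUnions m) ?_
    rintro _ ⟨j, F, rfl⟩
    rw [measure_preimage_word, measure_preimage_word]
    refine Finset.sum_le_sum fun w _ => ?_
    rw [Measure.restrict_apply (measurableSet_cyl m j _), Measure.smul_apply, ENNReal.smul_def,
      smul_eq_mul]
    exact measure_cyl_inter_orbitsClose_le hδ hlow hφ0 hmod hP hx hz hΦ n j _
  have hA' := hle A
  rwa [Measure.restrict_apply hA, Measure.smul_apply, ENNReal.smul_def, smul_eq_mul] at hA'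

end Distortion

end CMS

theorem statement9_general {E V K : Type*} [Fintype E] [Fintype V] [MetricSpace K]
    [MeasurableSpace K] (S : CMS E V K)
    (P : ∀ m : ℤ, K → @Measure (ℤ → E) (Am E m)) (hP : IsKernel S P)
    (φ : E → ℝ → ℝ) (hφmono : ∀ e, Monotone (φ e)) (hφ0 : ∀ e t, 0 ≤ φ e t)
    (hmod : ∀ e, ∀ u ∈ S.Ks (S.i e), ∀ v ∈ S.Ks (S.i e), ∀ t : ℝ,
      dist u v ≤ t → |S.p e u - S.p e v| ≤ φ e t)
    (hdini : ∀ e, ∃ c > (0 : ℝ), MeasureTheory.IntegrableOn (fun t => φ e t / t) (Set.Ioc 0 c))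
    (δ : ℝ) (hδ : 0 < δ) (hlow : ∀ e, ∀ u ∈ S.Ks (S.i e), δ ≤ S.p e u)
    (xs : V → K) (hxs : ∀ v, xs v ∈ S.Ks v) (x : K) :
    ∀ m : ℤ, m ≤ 0 → ∀ A : Set (ℤ → E), MeasurableSet[Am E m] A →
      PmMix P xs m A = 0 → P m x A = 0 := by
  intro m _ A hA hA0
  obtain ⟨v, hxv⟩ := S.Ks_cover x
  obtain ⟨b, hab, hb1⟩ := exists_between S.ha1
  have hΦ : Summable fun k : ℕ => ∑ e, φ e (b ^ k) := summable_sum fun e _ => by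
    obtain ⟨c, hc, hint⟩ := hdini e
    exact summable_comp_pow_of_integrableOn_div (hφmono e) (hφ0 e) hc hint (S.ha0.trans hab) hb1
  have hclose : ∀ n, P m x (A ∩ S.orbitsClose m x (xs v) b n) = 0 := fun n => le_zero_iff.1 <|
    (CMS.measure_inter_orbitsClose_le hδ hlow hφ0 hmod hP hxv (hxs v) hΦ hA n).trans_eq
      (by rw [apply_eq_zero_of_PmMix_apply_eq_zero hA0 v, mul_zero])
  rw [measure_eq_zero_iff_ae_notMem]
  filter_upwards [CMS.ae_exists_mem_orbitsClose hP hxv (hxs v) m hab,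
    ae_all_iff.2 fun n => measure_eq_zero_iff_ae_notMem.1 (hclose n)] with σ ⟨n, hσn⟩ hσ hσA
  exact hσ n ⟨hσA, hσn⟩

/-- if each `p_e|_{K_{i(e)}}` is Dini-continuous and bounded below by `δ > 0`,
then `P^m_x ≪ P^m_{x_1…x_N}` for every `x ∈ K` and `m ≤ 0`. -/
theorem statement9 {E V K : Type*} [Fintype E] [Fintype V] [MetricSpace K] [CompleteSpace K]
    [MeasurableSpace K] [BorelSpace K] (S : CMS E V K)
    (P : ∀ m : ℤ, K → @Measure (ℤ → E) (Am E m)) (hP : IsKernel S P)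
    (φ : E → ℝ → ℝ) (hφmono : ∀ e, Monotone (φ e)) (hφ0 : ∀ e t, 0 ≤ φ e t)
    (hmod : ∀ e, ∀ u ∈ S.Ks (S.i e), ∀ v ∈ S.Ks (S.i e), ∀ t : ℝ,
      dist u v ≤ t → |S.p e u - S.p e v| ≤ φ e t)
    (hdini : ∀ e, ∃ c > (0 : ℝ), MeasureTheory.IntegrableOn (fun t => φ e t / t) (Set.Ioc 0 c))
    (δ : ℝ) (hδ : 0 < δ) (hlow : ∀ e, ∀ u ∈ S.Ks (S.i e), δ ≤ S.p e u)
    (xs : V → K) (hxs : ∀ v, xs v ∈ S.Ks v) (x : K) :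
    ∀ m : ℤ, m ≤ 0 → ∀ A : Set (ℤ → E), MeasurableSet[Am E m] A →
      PmMix P xs m A = 0 → P m x A = 0 :=
  statement9_general S P hP φ hφmono hφ0 hmod hdini δ hδ hlow xs hxs x
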